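/- arXiv:2301.09216 — 2 statements merged into one kernel-verified Lean document; each statement's English description precedes it below -/
import Mathlib

section
/- Let ({\bf T},σ) be a connected ({\bf T},σ)-graph built from {\bf T} = (T_1,…,T_m) with each T_i a k-tuple of distinct indices in [km], black edges joining consecutive entries of each T_i, solid red edges joining repeated indices, and dotted red edges joining indices exchanged by σ ∈ Sym(Range({\bf T})). Let a(σ) be the number of non-fixed points of σ and |{\bf T}| = |∪_i T_i|. Then km − |{\bf T}| + a(σ) ≥ m − 1 + 1[σ ≠ id]. -/
open Finset

/-!
Contract each row of the `(T,σ)`-graph, which its black edges connect, to a single vertex, and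
each index of `Range T`, whose occurrences the solid red edges connect, to another; the dotted
red edges become edges `q — σ q`. The contracted graph on `m + |T|` vertices is still connected,
and stays so after deleting the edge `q₀ — σ q₀` for one moved point `q₀`, because the rest of the
cycle of `q₀` still joins `q₀` to `σ q₀`. What remains has at most `km` row–index edges and
`a(σ) − 1[σ ≠ id]` index–index edges, while a connected graph has at least one edge fewer than
it has vertices.
-/

namespace SimpleGraph

theorem card_le_card_add_one_of_connected_fromEdgeSet_range {V α : Type*} [Finite α]
    {f : α → Sym2 V} (h : (fromEdgeSet (Set.range f)).Connected) :
    Nat.card V ≤ Nat.card α + 1 := by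
  have hsub : (fromEdgeSet (Set.range f)).edgeSet ⊆ Set.range f := by
    rw [edgeSet_fromEdgeSet]
    exact Set.sdiff_subset
  calc Nat.card V ≤ Nat.card (fromEdgeSet (Set.range f)).edgeSet + 1 :=
        h.card_vert_le_card_edgeSet_add_one
    _ ≤ Nat.card α + 1 := by
        gcongr
        exact (Nat.card_mono (Set.finite_range f) hsub).trans (Finite.card_range_le f)

end SimpleGraph

namespace Equiv.Perm

theorem rel_apply_of_forall_ne {β : Type*} [Finite β] {r : β → β → Prop} (hr : Equivalence r)
    {σ : Perm β} {q₀ : β} (h : ∀ q, q ≠ q₀ → r q (σ q)) (q : β) : r q (σ q) := by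
  rcases ne_or_eq q q₀ with hq | rfl
  · exact h q hq
  have hpow : ∀ n, r (σ q) ((σ ^ (n + 1)) q) := by
    intro n
    induction n with
    | zero => exact hr.refl _
    | succ n ih =>
      rw [pow_succ', mul_apply]
      rcases ne_or_eq ((σ ^ (n + 1)) q) q with hne | heq
      · exact hr.trans ih (h _ hne)
      · rw [heq]
        exact hr.refl _
  have hcycle := hpow (orderOf σ - 1)
  rw [Nat.sub_add_cancel (orderOf_pos σ), pow_orderOf_eq_one, one_apply] at hcycle
  exact hr.symm hcycle

variable {α : Type*} {σ : Perm α}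

theorem apply_mem_iff_of_forall_ne {p : α → Prop} (h : ∀ x, σ x ≠ x → p x) (x : α) :
    p (σ x) ↔ p x := by
  by_cases hx : σ x = x
  · rw [hx]
  · exact iff_of_true (h _ fun hσx => hx (σ.injective hσx)) (h x hx)

theorem card_support_subtypePerm [DecidableEq α] [Fintype α] {s : Finset α}
    (h : ∀ x, σ x ≠ x → x ∈ s) :
    #(σ.subtypePerm (apply_mem_iff_of_forall_ne h) : Perm s).support = #σ.support := by
  conv_rhs => rw [← ofSubtype_subtypePerm (apply_mem_iff_of_forall_ne h) h, support_ofSubtype,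
    card_map]
  convert rfl

end Equiv.Perm

section RowIndexGraph

open SimpleGraph

variable {ι κ β : Type*} (T : ι → κ → β) (σ : Equiv.Perm β)

def EntriesLinked (v w : ι × κ) : Prop :=
  v.1 = w.1 ∨ T v.1 v.2 = T w.1 w.2 ∨ σ (T v.1 v.2) = T w.1 w.2

variable [DecidableEq β] [Fintype β] (q₀ : β)

/-- The edges of the contracted `(T,σ)`-graph, without the edge `q₀ — σ q₀`. -/
def rowIndexEdge : (ι × κ) ⊕ (σ.support.erase q₀) → Sym2 (ι ⊕ β)
  | .inl p => s(.inl p.1, .inr (T p.1 p.2))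
  | .inr q => s(.inr q, .inr (σ q))

def rowIndexGraph : SimpleGraph (ι ⊕ β) :=
  fromEdgeSet (Set.range (rowIndexEdge T σ q₀))

variable {T σ q₀}

theorem rowIndexGraph_adj_entry (i : ι) (j : κ) :
    (rowIndexGraph T σ q₀).Adj (.inl i) (.inr (T i j)) := by
  rw [rowIndexGraph, fromEdgeSet_adj]
  exact ⟨⟨.inl (i, j), rfl⟩, Sum.inl_ne_inr⟩

theorem rowIndexGraph_reachable_apply (q : β) :
    (rowIndexGraph T σ q₀).Reachable (.inr q) (.inr (σ q)) := by
  refine σ.rel_apply_of_forall_ne (q₀ := q₀)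
    (r := fun a b => (rowIndexGraph T σ q₀).Reachable (.inr a) (.inr b))
    ⟨fun _ => .rfl, .symm, .trans⟩ (fun q hq => ?_) q
  by_cases hfix : σ q = q
  · rw [hfix]
  · refine Adj.reachable ?_
    rw [rowIndexGraph, fromEdgeSet_adj]
    exact ⟨⟨.inr ⟨q, mem_erase.2 ⟨hq, Equiv.Perm.mem_support.2 hfix⟩⟩, rfl⟩,
      by simpa [eq_comm] using hfix⟩

theorem rowIndexGraph_connected (hT : ∀ b, ∃ i j, T i j = b) {G : SimpleGraph (ι × κ)}
    (hG : ∀ v w, G.Adj v w → EntriesLinked T σ v w ∨ EntriesLinked T σ w v)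
    (hconn : G.Connected) : (rowIndexGraph T σ q₀).Connected := by
  set H := rowIndexGraph T σ q₀
  have hentry (v : ι × κ) : H.Reachable (.inl v.1) (.inr (T v.1 v.2)) :=
    (rowIndexGraph_adj_entry v.1 v.2).reachable
  have hlinked : ∀ v w, EntriesLinked T σ v w → H.Reachable (.inl v.1) (.inl w.1) := by
    rintro v w (h | h | h)
    · rw [h]
    · exact (hentry v).trans (h ▸ (hentry w).symm)
    · exact (hentry v).trans ((rowIndexGraph_reachable_apply _).trans (h ▸ (hentry w).symm))
  have hrow : ∀ v w, G.Reachable v w → H.Reachable (.inl v.1) (.inl w.1) := by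
    intro v w hvw
    rw [reachable_iff_reflTransGen] at hvw ⊢
    refine Relation.ReflTransGen.lift' (fun v : ι × κ => (.inl v.1 : ι ⊕ β))
      (fun v w hadj => ?_) v w hvw
    rw [Function.onFun, ← reachable_iff_reflTransGen]
    rcases hG v w hadj with h | h
    exacts [hlinked v w h, (hlinked w v h).symm]
  obtain ⟨v₀⟩ := hconn.nonempty
  refine (connected_iff_exists_forall_reachable _).2 ⟨.inl v₀.1, ?_⟩
  rintro (i | b)
  · exact hrow v₀ (i, v₀.2) (hconn.preconnected _ _)
  · obtain ⟨i, j, rfl⟩ := hT b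
    exact (hrow v₀ (i, j) (hconn.preconnected _ _)).trans (hentry (i, j))

theorem card_add_card_le_of_connected [Fintype ι] [Fintype κ] (hT : ∀ b, ∃ i j, T i j = b)
    {G : SimpleGraph (ι × κ)}
    (hG : ∀ v w, G.Adj v w → EntriesLinked T σ v w ∨ EntriesLinked T σ w v)
    (hconn : G.Connected) :
    Fintype.card ι + Fintype.card β + (if σ ≠ 1 then 1 else 0)
      ≤ Fintype.card ι * Fintype.card κ + #σ.support + 1 := by
  obtain ⟨q₀, hq₀⟩ : ∃ q₀, #(σ.support.erase q₀) + (if σ ≠ 1 then 1 else 0) = #σ.support := by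
    by_cases hσ : σ = 1
    · obtain ⟨v⟩ := hconn.nonempty
      exact ⟨T v.1 v.2, by simp [hσ]⟩
    · obtain ⟨q₀, hq₀⟩ := nonempty_iff_ne_empty.2 (Equiv.Perm.support_eq_empty_iff.not.2 hσ)
      have := card_pos.2 ⟨q₀, hq₀⟩
      exact ⟨q₀, by rw [card_erase_of_mem hq₀, if_pos hσ]; omega⟩
  have hcount := card_le_card_add_one_of_connected_fromEdgeSet_range
    (rowIndexGraph_connected (q₀ := q₀) hT hG hconn)
  simp only [Nat.card_eq_fintype_card, Fintype.card_sum, Fintype.card_prod,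
    Fintype.card_coe] at hcount
  omega

end RowIndexGraph

theorem connected_graph_count_general (m k : ℕ)
    (T : Fin m → Fin k → Fin (k * m))
    (σ : Equiv.Perm (Fin (k * m)))
    (hσ : ∀ q, (∀ i j, T i j ≠ q) → σ q = q)
    (G : SimpleGraph (Fin m × Fin k))
    (hG : G = SimpleGraph.fromRel (fun v w =>
      (v.1 = w.1 ∧ (v.2.val + 1 = w.2.val ∨ w.2.val + 1 = v.2.val)) ∨
      (T v.1 v.2 = T w.1 w.2) ∨
      (T v.1 v.2 ≠ T w.1 w.2 ∧
        (σ (T v.1 v.2) = T w.1 w.2 ∨ σ (T w.1 w.2) = T v.1 v.2))))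
    (hconn : G.Connected) :
    k * m - (Finset.image (fun p : Fin m × Fin k => T p.1 p.2) Finset.univ).card
        + σ.support.card
      ≥ m - 1 + (if σ ≠ 1 then 1 else 0) := by
  classical
  set S := image (fun p : Fin m × Fin k => T p.1 p.2) univ
  have hmem (i j) : T i j ∈ S := mem_image_of_mem _ (mem_univ (i, j))
  have hsupp (q) (hq : σ q ≠ q) : q ∈ S :=
    by_contra fun h => hq (hσ q fun i j hij => h (hij ▸ hmem i j))
  set T' : Fin m → Fin k → S := fun i j => ⟨T i j, hmem i j⟩
  have hcard := Equiv.Perm.card_support_subtypePerm hsupp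
  set σ' : Equiv.Perm S := σ.subtypePerm (σ.apply_mem_iff_of_forall_ne hsupp)
  have hT' (b : S) : ∃ i j, T' i j = b := by
    obtain ⟨⟨i, j⟩, -, hb⟩ := mem_image.1 b.2
    exact ⟨i, j, Subtype.ext hb⟩
  have hG' (v w) (hadj : G.Adj v w) : EntriesLinked T' σ' v w ∨ EntriesLinked T' σ' w v := by
    rw [hG, SimpleGraph.fromRel_adj] at hadj
    simp only [EntriesLinked, T', σ', Subtype.ext_iff, Equiv.Perm.subtypePerm_apply]
    grind
  have hcount := card_add_card_le_of_connected hT' hG' hconn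
  simp only [Fintype.card_fin, Fintype.card_coe, ne_eq, ← Equiv.Perm.card_support_eq_zero,
    hcard] at hcount ⊢
  have hS : #S ≤ k * m := card_le_univ S |>.trans_eq (Fintype.card_fin _)
  rw [Nat.mul_comm m k] at hcount
  split_ifs at hcount ⊢ <;> omega

/-- for a connected `(T,σ)`-graph (black edges along each tuple `T_i`, solid
red edges between repeated indices, dotted red edges between indices exchanged by `σ`),
one has `km − |T| + a(σ) ≥ m − 1 + 1[σ ≠ id]`. -/
theorem connected_graph_count (m k : ℕ) (hm : 1 ≤ m) (hk : 1 ≤ k)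
    (T : Fin m → Fin k → Fin (k * m))
    (hinj : ∀ i, Function.Injective (T i))
    (σ : Equiv.Perm (Fin (k * m)))
    (hσ : ∀ q, (∀ i j, T i j ≠ q) → σ q = q)
    (G : SimpleGraph (Fin m × Fin k))
    (hG : G = SimpleGraph.fromRel (fun v w =>
      (v.1 = w.1 ∧ (v.2.val + 1 = w.2.val ∨ w.2.val + 1 = v.2.val)) ∨
      (T v.1 v.2 = T w.1 w.2) ∨
      (T v.1 v.2 ≠ T w.1 w.2 ∧
        (σ (T v.1 v.2) = T w.1 w.2 ∨ σ (T w.1 w.2) = T v.1 v.2))))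
    (hconn : G.Connected) :
    k * m - (Finset.image (fun p : Fin m × Fin k => T p.1 p.2) Finset.univ).card
        + σ.support.card
      ≥ m - 1 + (if σ ≠ 1 then 1 else 0) :=
  connected_graph_count_general m k T σ hσ G hG hconn
end

section
/- With the same graph setup, suppose ({\bf T},σ) is irreducible (connected, and for no i does T_i have a unique connection point with σ fixing all other entries of T_i). Then km − |{\bf T}| + a(σ)/2 ≥ m. -/
/-!
Call an entry shared-or-moved if its value also occurs at another position or is moved by `σ`.
Irreducibility leaves every row with at least two such entries, so there are at least `2m` of them.
On the other hand a value occurring `r` times contributes `2(r - 1) + [σ moves it]` to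
`2km - 2|T| + a(σ)`, which is at least its number of shared-or-moved occurrences.
-/

open Finset

def SharedOrMoved {ι α : Type*} (f : ι → α) (σ : Equiv.Perm α) (p : ι) : Prop :=
  (∃ q, q ≠ p ∧ f q = f p) ∨ σ (f p) ≠ f p

section SharedOrMoved

variable {ι α : Type*} [Fintype ι] [DecidableEq α] (f : ι → α) (σ : Equiv.Perm α)
  [DecidablePred (SharedOrMoved f σ)]

/-- A value occurring `r ≥ 2` times has at most `r ≤ 2r - 2` shared-or-moved occurrences; a value
occurring once has one exactly when `σ` moves it. -/
theorem card_sharedOrMoved_fiber_add_two_le {v : α} (hv : v ∈ univ.image f) :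
    #{p | SharedOrMoved f σ p ∧ f p = v} + 2 ≤ 2 * #{p | f p = v} + if σ v ≠ v then 1 else 0 := by
  have hpos : 1 ≤ #{p | f p = v} := by
    obtain ⟨p, -, hp⟩ := mem_image.1 hv
    exact card_pos.2 ⟨p, by simpa using hp⟩
  have hle : #{p | SharedOrMoved f σ p ∧ f p = v} ≤ #{p | f p = v} :=
    card_le_card fun p hp => by simp_all
  by_cases hσv : σ v = v
  swap
  · rw [if_pos hσv]
    omega
  rw [if_neg (not_not_intro hσv)]
  by_cases hmany : 2 ≤ #{p | f p = v}
  · omega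
  have hnone : #{p | SharedOrMoved f σ p ∧ f p = v} = 0 := by
    refine card_eq_zero.2 (filter_eq_empty_iff.2 ?_)
    rintro p - ⟨⟨q, hqp, hq⟩ | hmoved, rfl⟩
    · exact hmany (one_lt_card.2 ⟨q, by simpa using hq, p, by simp, hqp⟩)
    · exact hmoved hσv
  omega

theorem card_sharedOrMoved_add_two_mul_card_image_le [Fintype α] :
    #{p | SharedOrMoved f σ p} + 2 * #(univ.image f) ≤ 2 * Fintype.card ι + #σ.support := by
  have hmaps : ∀ s : Finset ι, (s : Set ι).MapsTo f (univ.image f) :=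
    fun _ p _ => mem_image_of_mem f (mem_univ p)
  calc #{p | SharedOrMoved f σ p} + 2 * #(univ.image f)
      = ∑ v ∈ univ.image f, (#{p | SharedOrMoved f σ p ∧ f p = v} + 2) := by
        rw [card_eq_sum_card_fiberwise (hmaps _), sum_add_distrib, sum_const, smul_eq_mul,
          mul_comm]
        simp only [filter_filter]
    _ ≤ ∑ v ∈ univ.image f, (2 * #{p | f p = v} + if σ v ≠ v then 1 else 0) :=
        sum_le_sum fun v hv => card_sharedOrMoved_fiber_add_two_le f σ hv
    _ = 2 * Fintype.card ι + #{v ∈ univ.image f | σ v ≠ v} := by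
        rw [sum_add_distrib, ← mul_sum, ← card_eq_sum_card_fiberwise (hmaps _), card_univ,
          sum_boole, Nat.cast_id]
    _ ≤ 2 * Fintype.card ι + #σ.support := by
        gcongr
        intro v hv
        simpa using (mem_filter.1 hv).2

end SharedOrMoved

theorem Finset.two_le_card_filter_of_forall_exists_ne {β : Type*} [Fintype β] [Nonempty β]
    (Q : β → Prop) [DecidablePred Q] (h : ∀ b, ∃ b', b' ≠ b ∧ Q b') : 2 ≤ #{b | Q b} := by
  obtain ⟨b₀⟩ := ‹Nonempty β›
  obtain ⟨b₁, -, hb₁⟩ := h b₀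
  obtain ⟨b₂, hne, hb₂⟩ := h b₁
  exact one_lt_card.2 ⟨b₁, by simpa using hb₁, b₂, by simpa using hb₂, hne.symm⟩

theorem Finset.mul_card_le_card_filter_prod {α β : Type*} [Fintype α] [Fintype β]
    (Q : α × β → Prop) [DecidablePred Q] {n : ℕ} (h : ∀ a, n ≤ #{b | Q (a, b)}) :
    n * Fintype.card α ≤ #{p | Q p} := by
  calc n * Fintype.card α = ∑ _a : α, n := by simp [mul_comm]
    _ ≤ ∑ a : α, #{b | Q (a, b)} := sum_le_sum fun a _ => h a
    _ = #{p | Q p} := by simp only [card_filter, Fintype.sum_prod_type]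

theorem irreducible_graph_count_general (m k : ℕ) (hk : 1 ≤ k)
    (T : Fin m → Fin k → Fin (k * m))
    (σ : Equiv.Perm (Fin (k * m)))
    -- a connection point of row `i` is an entry `T i j` with `σ(T i j) ∉ T_i` or
    -- `T i j ∈ T_{i'}` for some `i' ≠ i`
    (connPoint : Fin m → Fin k → Prop)
    (hconnPoint : ∀ i j, connPoint i j ↔
      ((∀ j', σ (T i j) ≠ T i j') ∨ (∃ i', i' ≠ i ∧ ∃ j', T i' j' = T i j)))
    -- irreducibility: no row breaks at a unique connection point
    (hirr : ¬ ∃ i j, (∀ j', j' ≠ j → ¬ connPoint i j') ∧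
      (∀ j', j' ≠ j → σ (T i j') = T i j')) :
    2 * (k * m) + σ.support.card
      ≥ 2 * (Finset.image (fun p : Fin m × Fin k => T p.1 p.2) Finset.univ).card
        + 2 * m := by
  classical
  set f := fun p : Fin m × Fin k => T p.1 p.2
  have hrow : ∀ i j, ∃ j', j' ≠ j ∧ SharedOrMoved f σ (i, j') := by
    intro i j
    by_contra! hfixed
    refine hirr ⟨i, j, fun j' hj' hconn => hfixed j' hj' ?_,
      fun j' hj' => not_not.1 fun hmoved => hfixed j' hj' (Or.inr hmoved)⟩
    rcases (hconnPoint i j').1 hconn with hmoved | ⟨i', hi', j'', hshared⟩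
    · exact Or.inr (hmoved j')
    · exact Or.inl ⟨(i', j''), fun h => hi' (congrArg Prod.fst h), hshared⟩
  have : Nonempty (Fin k) := ⟨⟨0, hk⟩⟩
  have hrows := mul_card_le_card_filter_prod _ fun i =>
    two_le_card_filter_of_forall_exists_ne _ (hrow i)
  have hcount := card_sharedOrMoved_add_two_mul_card_image_le f σ
  simp only [Fintype.card_prod, Fintype.card_fin] at hrows hcount
  linarith [Nat.mul_comm m k]

/-- for an irreducible `(T,σ)` pair (connected, and no `T_i` has a unique
connection point with `σ` fixing all other entries of `T_i`),
`km − |T| + a(σ)/2 ≥ m`, stated multiplied through by `2`. -/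
theorem irreducible_graph_count (m k : ℕ) (hm : 1 ≤ m) (hk : 1 ≤ k)
    (T : Fin m → Fin k → Fin (k * m))
    (hinj : ∀ i, Function.Injective (T i))
    (σ : Equiv.Perm (Fin (k * m)))
    (hσ : ∀ q, (∀ i j, T i j ≠ q) → σ q = q)
    (G : SimpleGraph (Fin m × Fin k))
    (hG : G = SimpleGraph.fromRel (fun v w =>
      (v.1 = w.1 ∧ (v.2.val + 1 = w.2.val ∨ w.2.val + 1 = v.2.val)) ∨
      (T v.1 v.2 = T w.1 w.2) ∨
      (T v.1 v.2 ≠ T w.1 w.2 ∧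
        (σ (T v.1 v.2) = T w.1 w.2 ∨ σ (T w.1 w.2) = T v.1 v.2))))
    (hconn : G.Connected)
    -- a connection point of row `i` is an entry `T i j` with `σ(T i j) ∉ T_i` or
    -- `T i j ∈ T_{i'}` for some `i' ≠ i`
    (connPoint : Fin m → Fin k → Prop)
    (hconnPoint : ∀ i j, connPoint i j ↔
      ((∀ j', σ (T i j) ≠ T i j') ∨ (∃ i', i' ≠ i ∧ ∃ j', T i' j' = T i j)))
    -- irreducibility: no row breaks at a unique connection point
    (hirr : ¬ ∃ i j, (∀ j', j' ≠ j → ¬ connPoint i j') ∧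
      (∀ j', j' ≠ j → σ (T i j') = T i j')) :
    2 * (k * m) + σ.support.card
      ≥ 2 * (Finset.image (fun p : Fin m × Fin k => T p.1 p.2) Finset.univ).card
        + 2 * m :=
  irreducible_graph_count_general m k hk T σ connPoint hconnPoint hirr
end
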